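/- Let R = K[[x,y]] with c = x, and for each N let I_N = (x^N, x^{N-1}y, ..., x y^{N-1}, y^{N^3}). Then I_N ⊆ m^N, length(R/I_N) = N^3 + O(N^2), length(R/(I_N, c)) = N^3, and hence lim_{N→∞} length(R/(I_N,c))/length(R/I_N) = 1. -/

import Mathlib

open IsLocalRing Filter

/-- Length of a module (as a natural number): the Krull dimension of its submodule lattice. -/
noncomputable def flength (R M : Type*) [Ring R] [AddCommGroup M] [Module R M] : ℕ :=
  (WithBot.unbotD 0 (Order.krullDim (Submodule R M))).toNat

/-- Minimal number of generators of a submodule. -/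
noncomputable def mu (R : Type*) {M : Type*} [Ring R] [AddCommGroup M] [Module R M]
    (N : Submodule R M) : ℕ :=
  sInf {n | ∃ s : Finset M, s.card = n ∧ Submodule.span R (s : Set M) = N}

/-- Hilbert–Samuel multiplicity of an ideal in a `d`-dimensional local ring. -/
noncomputable def eMult (R : Type*) [CommRing R] (d : ℕ) (I : Ideal R) : ℝ :=
  Filter.limsup
    (fun n : ℕ => (d.factorial : ℝ) * (flength R (R ⧸ I ^ n) : ℝ) / (n : ℝ) ^ d)
    Filter.atTop

/-- An ideal of a local ring is `m`-primary. -/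
def IsMPrimary (R : Type*) [CommRing R] [IsLocalRing R] (I : Ideal R) : Prop :=
  I ≠ ⊤ ∧ ∃ k : ℕ, maximalIdeal R ^ k ≤ I

/-- A commutative ring is regular local. -/
def IsRegularLocal (A : Type*) [CommRing A] : Prop :=
  IsNoetherianRing A ∧ ∃ _ : IsLocalRing A,
    ringKrullDim A = (mu A (IsLocalRing.maximalIdeal A) : WithBot ℕ∞)

/-- Length of `J/I` for ideals `I ≤ J`. -/
noncomputable def qlen (R : Type*) [CommRing R] (I J : Ideal R) : ℕ :=
  flength R (Submodule.map (Submodule.mkQ (I : Submodule R R)) (J : Submodule R R))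

/-- The ideal `I_N = (x^N, x^{N-1}y, …, x y^{N-1}, y^{N^3})` in `K[[x,y]]`. -/
noncomputable def stmtIdeal (K : Type*) [Field K] (N : ℕ) : Ideal (MvPowerSeries (Fin 2) K) :=
  Ideal.span
    ((Set.range fun i : Fin N =>
        (MvPowerSeries.X 0 : MvPowerSeries (Fin 2) K) ^ (N - (i : ℕ)) * MvPowerSeries.X 1 ^ (i : ℕ)) ∪
      {(MvPowerSeries.X 1 : MvPowerSeries (Fin 2) K) ^ (N ^ 3)})

/-!
`I_N` and `(I_N, x)` are monomial ideals. For a monomial ideal whose generators have exponent set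
`T`, the quotient has the standard monomials (those outside the upper closure of `T`) as a
`K`-basis, and its length equals their number: the `K`-dimension bounds the length from above, and
removing a maximal standard exponent at a time yields a strict chain of monomial ideals of that
length. The standard monomials of `I_N` are the `x^a y^b` with `a = 0, b < N³` or `a + b < N`, so
there are between `N³` and `N³ + N²` of them; those of `(I_N, x)` are the `y^b` with `b < N³`.
-/

theorem flength_eq_toNat_length (R M : Type*) [Ring R] [AddCommGroup M] [Module R M] :
    flength R M = (Module.length R M).toNat := by
  rw [flength, ← Module.coe_length, WithBot.unbotD_coe]

theorem Module.length_le_length_of_isScalarTower (A R M : Type*) [Ring A] [Ring R]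
    [AddCommGroup M] [Module R M] [SMul A R] [Module A M] [IsScalarTower A R M] :
    Module.length R M ≤ Module.length A M := by
  rw [← WithBot.coe_le_coe, Module.coe_length, Module.coe_length]
  exact Order.krullDim_le_of_strictMono _ (Submodule.restrictScalarsEmbedding A R M).strictMono

noncomputable def Finsupp.finTwoOrderIsoProd (M : Type*) [Zero M] [Preorder M] :
    (Fin 2 →₀ M) ≃o M × M :=
  Finsupp.orderIsoFunOnFinite.trans (OrderIso.finTwoArrowIso M)

theorem Finsupp.finTwoOrderIsoProd_apply {M : Type*} [Zero M] [Preorder M] (f : Fin 2 →₀ M) :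
    Finsupp.finTwoOrderIsoProd M f = (f 0, f 1) :=
  rfl

namespace MvPowerSeries

section CommSemiring

variable {σ R : Type*} [CommSemiring R]

def coeffVanishingIdeal (S : LowerSet (σ →₀ ℕ)) : Ideal (MvPowerSeries σ R) where
  carrier := {f | ∀ e ∈ S, coeff e f = 0}
  add_mem' hf hg e he := by rw [map_add, hf e he, hg e he, add_zero]
  zero_mem' e _ := map_zero _
  smul_mem' c f hf e he := by
    classical
    rw [smul_eq_mul, coeff_mul]
    refine Finset.sum_eq_zero fun p hp => ?_
    rw [hf p.2 (S.lower (Finset.HasAntidiagonal.antidiagonal.snd_le hp) he), mul_zero]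

theorem mem_coeffVanishingIdeal {S : LowerSet (σ →₀ ℕ)} {f : MvPowerSeries σ R} :
    f ∈ coeffVanishingIdeal S ↔ ∀ e ∈ S, coeff e f = 0 :=
  Iff.rfl

theorem monomial_one_dvd_of_coeff_ne_zero {a : σ →₀ ℕ} {f : MvPowerSeries σ R}
    (h : ∀ e, coeff e f ≠ 0 → a ≤ e) : monomial a 1 ∣ f := by
  classical
  let g : MvPowerSeries σ R := fun p => coeff (p + a) f
  refine ⟨g, ext fun e => ?_⟩
  rw [coeff_monomial_mul, one_mul]
  split_ifs with hae
  · exact congrArg (coeff · f) (tsub_add_cancel_of_le hae).symm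
  · by_contra hne
    exact hae (h e hne)

theorem mem_span_monomial_one_of_coeff_ne_zero {T : Set (σ →₀ ℕ)} (hT : T.Finite)
    {f : MvPowerSeries σ R} (hf : ∀ e, coeff e f ≠ 0 → ∃ a ∈ T, a ≤ e) :
    f ∈ Ideal.span ((monomial · (1 : R)) '' T) := by
  classical
  induction T, hT using Set.Finite.induction_on generalizing f with
  | empty =>
    convert Ideal.zero_mem _
    exact ext fun e => by_contra fun h => by simpa using hf e h
  | @insert a T _ _ ih =>
    let g : MvPowerSeries σ R := fun e => if a ≤ e then coeff e f else 0
    let h : MvPowerSeries σ R := fun e => if a ≤ e then 0 else coeff e f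
    have hfgh : f = g + h := ext fun e => by
      change coeff e f = (if a ≤ e then coeff e f else 0) + (if a ≤ e then 0 else coeff e f)
      split_ifs <;> simp
    have hg : monomial a 1 ∣ g := monomial_one_dvd_of_coeff_ne_zero fun e he => by
      by_contra hae
      exact he (if_neg hae)
    have hh : h ∈ Ideal.span ((monomial · (1 : R)) '' T) := ih fun e he => by
      have hae : ¬a ≤ e := fun hae => he (if_pos hae)
      obtain ⟨b, hb, hbe⟩ := hf e fun hfe => he ((if_neg hae).trans hfe)
      rcases hb with rfl | hb
      · exact absurd hbe hae
      · exact ⟨b, hb, hbe⟩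
    rw [hfgh, Set.image_insert_eq, Ideal.span_insert]
    exact Ideal.add_mem _
      (Ideal.mem_sup_left (Ideal.mem_of_dvd _ hg (Ideal.mem_span_singleton_self _)))
      (Ideal.mem_sup_right hh)

theorem span_monomial_one_eq_coeffVanishingIdeal {T : Set (σ →₀ ℕ)} (hT : T.Finite) :
    Ideal.span ((monomial · (1 : R)) '' T) = coeffVanishingIdeal (upperClosure T).compl := by
  refine le_antisymm (Ideal.span_le.2 ?_) fun f hf => mem_span_monomial_one_of_coeff_ne_zero hT ?_
  · classical
    rintro _ ⟨a, ha, rfl⟩ e he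
    rw [coeff_monomial, if_neg]
    rintro rfl
    exact UpperSet.mem_compl_iff.1 he (subset_upperClosure ha)
  · intro e he
    by_contra hcl
    exact he (hf e (UpperSet.mem_compl_iff.2 fun h => hcl (mem_upperClosure.1 h)))

theorem monomial_finTwoOrderIsoProd_symm (p : ℕ × ℕ) :
    monomial ((Finsupp.finTwoOrderIsoProd ℕ).symm p) (1 : R) = X 0 ^ p.1 * X 1 ^ p.2 := by
  rw [X_pow_eq, X_pow_eq, monomial_mul_monomial, one_mul]
  have h := (Finsupp.finTwoOrderIsoProd ℕ).apply_symm_apply p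
  rw [Finsupp.finTwoOrderIsoProd_apply, Prod.ext_iff] at h
  refine congrArg (monomial · (1 : R)) (Finsupp.ext fun i => ?_)
  fin_cases i
  · simpa using h.1
  · simpa using h.2

variable [Nontrivial R]

theorem monomial_one_mem_coeffVanishingIdeal {S : LowerSet (σ →₀ ℕ)} {a : σ →₀ ℕ} :
    monomial a (1 : R) ∈ coeffVanishingIdeal S ↔ a ∉ S := by
  classical
  refine ⟨fun h ha => by simpa using h a ha, fun ha e he => ?_⟩
  rw [coeff_monomial, if_neg (ne_of_mem_of_not_mem he ha)]

theorem coeffVanishingIdeal_strictAnti :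
    StrictAnti (coeffVanishingIdeal : LowerSet (σ →₀ ℕ) → Ideal (MvPowerSeries σ R)) := by
  intro S T hST
  obtain ⟨a, haT, haS⟩ := Set.exists_of_ssubset (LowerSet.coe_ssubset_coe.2 hST)
  refine SetLike.lt_iff_le_and_exists.2
    ⟨fun f hf e he => hf e (hST.le he), monomial a 1, ?_, fun h => ?_⟩
  · exact monomial_one_mem_coeffVanishingIdeal.2 haS
  · exact monomial_one_mem_coeffVanishingIdeal.1 h haT

theorem encard_le_coheight_coeffVanishingIdeal (S : LowerSet (σ →₀ ℕ))
    (hS : (S : Set (σ →₀ ℕ)).Finite) :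
    (S : Set (σ →₀ ℕ)).encard ≤ Order.coheight (coeffVanishingIdeal (R := R) S) := by
  rw [← hS.cast_ncard_eq]
  induction hn : (S : Set (σ →₀ ℕ)).ncard generalizing S with
  | zero => exact zero_le
  | succ n ih =>
    -- removing a maximal exponent `e` keeps `S` a lower set and strictly enlarges the ideal
    obtain ⟨e, he⟩ := hS.exists_maximal (Set.nonempty_of_ncard_ne_zero (by omega))
    have herase :
        ((S.erase e : LowerSet (σ →₀ ℕ)) : Set (σ →₀ ℕ)) = (S : Set (σ →₀ ℕ)) \ {e} := by
      ext x
      simp only [LowerSet.coe_erase, Set.mem_sdiff, SetLike.mem_coe, UpperSet.coe_Ici, Set.mem_Ici,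
        Set.mem_singleton_iff]
      exact and_congr_right fun hx =>
        not_congr ⟨fun hex => (he.eq_of_le hx hex).symm, fun h => h ▸ le_rfl⟩
    have hcard : ((S.erase e : LowerSet (σ →₀ ℕ)) : Set (σ →₀ ℕ)).ncard = n := by
      rw [herase, Set.ncard_sdiff_singleton_of_mem he.1, hn, Nat.add_sub_cancel]
    calc ((n + 1 : ℕ) : ℕ∞) = n + 1 := by push_cast; rfl
      _ ≤ Order.coheight (coeffVanishingIdeal (R := R) (S.erase e)) + 1 := by
        gcongr
        exact ih _ (herase ▸ hS.sdiff) hcard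
      _ ≤ Order.coheight (coeffVanishingIdeal (R := R) S) :=
        Order.coheight_add_one_le (coeffVanishingIdeal_strictAnti (LowerSet.erase_lt.2 he.1))

end CommSemiring

section Field

variable {σ K : Type*} [Field K]

theorem length_field_quotient_coeffVanishingIdeal (S : LowerSet (σ →₀ ℕ)) :
    Module.length K (MvPowerSeries σ K ⧸ coeffVanishingIdeal (R := K) S) =
      (S : Set (σ →₀ ℕ)).encard := by
  let restrict : MvPowerSeries σ K →ₗ[K] (S → K) := LinearMap.pi fun e => coeff e.1
  have hsurj : Function.Surjective restrict := fun v => by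
    classical
    exact ⟨fun e => if h : e ∈ S then v ⟨e, h⟩ else 0, funext fun e => dif_pos e.2⟩
  have hker : LinearMap.ker restrict = (coeffVanishingIdeal S).restrictScalars K := by
    ext f
    simp [restrict, funext_iff, mem_coeffVanishingIdeal]
  let equiv : (MvPowerSeries σ K ⧸ coeffVanishingIdeal (R := K) S) ≃ₗ[K] (S → K) :=
    ((Submodule.Quotient.restrictScalarsEquiv K _).symm.trans
      (Submodule.quotEquivOfEq _ _ hker.symm)).trans (restrict.quotKerEquivOfSurjective hsurj)
  rw [equiv.length_eq, Module.length_pi, Module.length_eq_one, mul_one]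
  exact ENat.card_coe_set_eq (S : Set (σ →₀ ℕ))

theorem flength_quotient_coeffVanishingIdeal (S : LowerSet (σ →₀ ℕ))
    (hS : (S : Set (σ →₀ ℕ)).Finite) :
    flength (MvPowerSeries σ K) (MvPowerSeries σ K ⧸ coeffVanishingIdeal (R := K) S) =
      (S : Set (σ →₀ ℕ)).ncard := by
  have hlen : Module.length (MvPowerSeries σ K)
      (MvPowerSeries σ K ⧸ coeffVanishingIdeal (R := K) S) =
        (S : Set (σ →₀ ℕ)).encard := by
    refine le_antisymm ?_ ?_
    · exact (Module.length_le_length_of_isScalarTower K _ _).trans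
        (length_field_quotient_coeffVanishingIdeal S).le
    · rw [Module.length_quotient]
      exact encard_le_coheight_coeffVanishingIdeal S hS
  rw [flength_eq_toNat_length, hlen, ← hS.cast_ncard_eq, ENat.toNat_natCast]

end Field

theorem flength_quotient_span_X_pow_mul_X_pow {K : Type*} [Field K] {P : Set (ℕ × ℕ)}
    (hP : P.Finite) (hfin : ((upperClosure P).compl : Set (ℕ × ℕ)).Finite) :
    flength (MvPowerSeries (Fin 2) K) (MvPowerSeries (Fin 2) K ⧸
        Ideal.span ((fun p => (X 0 ^ p.1 * X 1 ^ p.2 : MvPowerSeries (Fin 2) K)) '' P)) =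
      ((upperClosure P).compl : Set (ℕ × ℕ)).ncard := by
  set φ := (Finsupp.finTwoOrderIsoProd ℕ).symm
  have himage : (fun p : ℕ × ℕ => (X 0 ^ p.1 * X 1 ^ p.2 : MvPowerSeries (Fin 2) K)) '' P =
      (monomial · 1) '' (φ '' P) := by
    simp only [Set.image_image, monomial_finTwoOrderIsoProd_symm, φ]
  rw [himage, span_monomial_one_eq_coeffVanishingIdeal (hP.image φ), upperClosure_image,
    UpperSet.compl_map, flength_quotient_coeffVanishingIdeal _ (by simpa using hfin.image φ),
    LowerSet.coe_map, Set.ncard_image_of_injective _ φ.injective]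

end MvPowerSeries

theorem pow_mul_pow_mem_span_pair_pow {A : Type*} [CommSemiring A] (x y : A) (a b : ℕ) :
    x ^ a * y ^ b ∈ Ideal.span {x, y} ^ (a + b) := by
  rw [pow_add]
  exact Ideal.mul_mem_mul (Ideal.pow_mem_pow (Ideal.subset_span (Set.mem_insert _ _)) a)
    (Ideal.pow_mem_pow (Ideal.subset_span (Set.mem_insert_of_mem _ (Set.mem_singleton y))) b)

theorem tendsto_pow_three_div_of_le {a : ℕ → ℕ} (C : ℕ) (hlo : ∀ N, N ^ 3 ≤ a N)
    (hhi : ∀ N, a N ≤ N ^ 3 + C * N ^ 2) :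
    Tendsto (fun N => ((N ^ 3 : ℕ) : ℝ) / a N) atTop (nhds 1) := by
  refine tendsto_of_tendsto_of_tendsto_of_le_of_le' (tendsto_natCast_div_add_atTop (C : ℝ))
    tendsto_const_nhds ?_ ?_
  · filter_upwards [eventually_ge_atTop 1] with N hN
    have ha : (0 : ℝ) < a N := by exact_mod_cast (pow_pos hN 3).trans_le (hlo N)
    have hle : (a N : ℝ) ≤ N ^ 3 + C * N ^ 2 := by exact_mod_cast hhi N
    rw [div_le_div_iff₀ (by positivity) ha]
    push_cast
    nlinarith
  · exact Eventually.of_forall fun N =>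
      div_le_one_of_le₀ (by exact_mod_cast hlo N) (Nat.cast_nonneg _)

open MvPowerSeries

def stmtExponents (N : ℕ) : Set (ℕ × ℕ) :=
  Set.range (fun i : Fin N => (N - (i : ℕ), (i : ℕ))) ∪ {(0, N ^ 3)}

theorem stmtExponents_finite (N : ℕ) : (stmtExponents N).Finite :=
  (Set.finite_range _).union (Set.finite_singleton _)

theorem stmtIdeal_eq_span (K : Type*) [Field K] (N : ℕ) :
    stmtIdeal K N = Ideal.span
      ((fun p => (X 0 ^ p.1 * X 1 ^ p.2 : MvPowerSeries (Fin 2) K)) '' stmtExponents N) := by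
  rw [stmtIdeal, stmtExponents, Set.image_union, Set.image_singleton, ← Set.range_comp, pow_zero,
    one_mul]
  rfl

theorem mem_upperClosure_stmtExponents {N : ℕ} {p : ℕ × ℕ} :
    p ∈ upperClosure (stmtExponents N) ↔ N ^ 3 ≤ p.2 ∨ 1 ≤ p.1 ∧ N ≤ p.1 + p.2 := by
  simp only [mem_upperClosure, stmtExponents, Set.mem_union, Set.mem_range, Set.mem_singleton_iff,
    Prod.le_def]
  constructor
  · rintro ⟨q, ⟨i, rfl⟩ | rfl, h1, h2⟩
    · have := i.2
      omega
    · exact Or.inl h2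
  · rintro (h | ⟨h1, h2⟩)
    · exact ⟨_, Or.inr rfl, Nat.zero_le _, h⟩
    · by_cases h3 : N ^ 3 ≤ p.2
      · exact ⟨_, Or.inr rfl, Nat.zero_le _, h3⟩
      have hN : N ≠ 0 := by rintro rfl; simp at h3
      exact ⟨_, Or.inl ⟨⟨min p.2 (N - 1), by omega⟩, rfl⟩, by dsimp only; omega, min_le_left _ _⟩

theorem le_add_of_mem_stmtExponents {N : ℕ} {p : ℕ × ℕ} (hp : p ∈ stmtExponents N) :
    N ≤ p.1 + p.2 := by
  rcases hp with ⟨i, rfl⟩ | rfl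
  · have := i.2
    dsimp only
    omega
  · exact (Nat.le_self_pow (by norm_num) N).trans_eq (zero_add _).symm

def stmtStandardExponents (N : ℕ) : Finset (ℕ × ℕ) :=
  {0} ×ˢ Finset.range (N ^ 3) ∪ {p ∈ Finset.range N ×ˢ Finset.range N | p.1 + p.2 < N}

theorem coe_compl_upperClosure_stmtExponents (N : ℕ) :
    ((upperClosure (stmtExponents N)).compl : Set (ℕ × ℕ)) = stmtStandardExponents N := by
  ext p
  simp only [UpperSet.coe_compl, Set.mem_compl_iff, SetLike.mem_coe, mem_upperClosure_stmtExponents,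
    stmtStandardExponents, Finset.mem_union, Finset.mem_filter, Finset.mem_product,
    Finset.mem_singleton, Finset.mem_range]
  have := Nat.le_self_pow (n := 3) (by norm_num) N
  omega

theorem pow_three_le_card_stmtStandardExponents (N : ℕ) :
    N ^ 3 ≤ (stmtStandardExponents N).card :=
  calc N ^ 3 = ({0} ×ˢ Finset.range (N ^ 3)).card := by simp
    _ ≤ _ := Finset.card_le_card Finset.subset_union_left

theorem card_stmtStandardExponents_le (N : ℕ) :
    (stmtStandardExponents N).card ≤ N ^ 3 + 1 * N ^ 2 := by
  refine (Finset.card_union_le _ _).trans (add_le_add (by simp) ?_)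
  exact (Finset.card_filter_le _ _).trans (by simp [sq])

theorem coe_compl_upperClosure_stmtExponents_union (N : ℕ) :
    ((upperClosure (stmtExponents N ∪ {(1, 0)})).compl : Set (ℕ × ℕ)) =
      ↑({0} ×ˢ Finset.range (N ^ 3)) := by
  ext p
  simp only [UpperSet.coe_compl, Set.mem_compl_iff, SetLike.mem_coe, upperClosure_union,
    upperClosure_singleton, UpperSet.mem_inf_iff, UpperSet.mem_Ici_iff,
    mem_upperClosure_stmtExponents, Prod.le_def, Finset.coe_product, Finset.coe_singleton,
    Finset.coe_range, Set.mem_prod, Set.mem_singleton_iff, Set.mem_Iio]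
  omega

theorem flength_quotient_stmtIdeal (K : Type*) [Field K] (N : ℕ) :
    flength (MvPowerSeries (Fin 2) K) (MvPowerSeries (Fin 2) K ⧸ stmtIdeal K N) =
      (stmtStandardExponents N).card := by
  have hcompl := coe_compl_upperClosure_stmtExponents N
  rw [stmtIdeal_eq_span, flength_quotient_span_X_pow_mul_X_pow (stmtExponents_finite N)
    (hcompl ▸ Finset.finite_toSet _), hcompl, Set.ncard_coe_finset]

theorem flength_quotient_stmtIdeal_sup_span_X_zero (K : Type*) [Field K] (N : ℕ) :
    flength (MvPowerSeries (Fin 2) K)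
      (MvPowerSeries (Fin 2) K ⧸ (stmtIdeal K N ⊔ Ideal.span {X 0})) = N ^ 3 := by
  have hcompl := coe_compl_upperClosure_stmtExponents_union N
  have hspan : stmtIdeal K N ⊔ Ideal.span {X 0} = Ideal.span
      ((fun p => (X 0 ^ p.1 * X 1 ^ p.2 : MvPowerSeries (Fin 2) K)) ''
        (stmtExponents N ∪ {(1, 0)})) := by
    rw [stmtIdeal_eq_span, Set.image_union, Ideal.span_union, Set.image_singleton, pow_one,
      pow_zero, mul_one]
  rw [hspan, flength_quotient_span_X_pow_mul_X_pow
    ((stmtExponents_finite N).union (Set.finite_singleton _))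
    (hcompl ▸ Finset.finite_toSet _), hcompl, Set.ncard_coe_finset, Finset.card_product,
    Finset.card_singleton, Finset.card_range, one_mul]

theorem stmtIdeal_le_span_pow (K : Type*) [Field K] (N : ℕ) :
    stmtIdeal K N ≤ Ideal.span {X 0, X 1} ^ N := by
  rw [stmtIdeal_eq_span, Ideal.span_le]
  rintro _ ⟨p, hp, rfl⟩
  exact Ideal.pow_le_pow_right (le_add_of_mem_stmtExponents hp)
    (pow_mul_pow_mem_span_pair_pow _ _ _ _)


/-- with `c = x`, one has `I_N ⊆ m^N`, `ℓ(R/I_N) = N³ + O(N²)`,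
`ℓ(R/(I_N, c)) = N³`, and the ratio `ℓ(R/(I_N,c))/ℓ(R/I_N)` tends to `1`. -/
theorem stmt_13 (K : Type*) [Field K] :
    (∀ N : ℕ, stmtIdeal K N ≤
      (Ideal.span ({MvPowerSeries.X 0, MvPowerSeries.X 1} : Set (MvPowerSeries (Fin 2) K))) ^ N) ∧
    (∃ C : ℕ, ∀ N : ℕ, 1 ≤ N →
      N ^ 3 ≤ flength (MvPowerSeries (Fin 2) K)
        (MvPowerSeries (Fin 2) K ⧸ stmtIdeal K N) ∧
      flength (MvPowerSeries (Fin 2) K) (MvPowerSeries (Fin 2) K ⧸ stmtIdeal K N) ≤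
        N ^ 3 + C * N ^ 2) ∧
    (∀ N : ℕ, 1 ≤ N →
      flength (MvPowerSeries (Fin 2) K)
        (MvPowerSeries (Fin 2) K ⧸
          (stmtIdeal K N ⊔ Ideal.span ({MvPowerSeries.X 0} : Set (MvPowerSeries (Fin 2) K)))) =
        N ^ 3) ∧
    Filter.Tendsto
      (fun N : ℕ =>
        (flength (MvPowerSeries (Fin 2) K)
          (MvPowerSeries (Fin 2) K ⧸
            (stmtIdeal K N ⊔ Ideal.span ({MvPowerSeries.X 0} : Set (MvPowerSeries (Fin 2) K)))) : ℝ) /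
        (flength (MvPowerSeries (Fin 2) K) (MvPowerSeries (Fin 2) K ⧸ stmtIdeal K N) : ℝ))
      Filter.atTop (nhds 1) := by
  refine ⟨stmtIdeal_le_span_pow K, ⟨1, fun N _ => ?_⟩,
    fun N _ => flength_quotient_stmtIdeal_sup_span_X_zero K N, ?_⟩
  · rw [flength_quotient_stmtIdeal]
    exact ⟨pow_three_le_card_stmtStandardExponents N, card_stmtStandardExponents_le N⟩
  · simp_rw [flength_quotient_stmtIdeal, flength_quotient_stmtIdeal_sup_span_X_zero]
    exact tendsto_pow_three_div_of_le 1 pow_three_le_card_stmtStandardExponents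
      card_stmtStandardExponents_le
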